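/- arXiv:2506.22735 — 6 statements merged into one kernel-verified Lean document; each statement's English description precedes it below -/
import Mathlib

section
/- Let ≤ be a preorder on a set W and let e be an equivalence relation on W that is strongly compatible with ≤. Then e_{≤_e} = e; that is, for all w, u ∈ W, (w,u) ∈ e if and only if both w ≤_e u and u ≤_e w. -/
/-- The equivalence relation `e_≤` induced by a preorder `le`. -/
def eOf {W : Type*} (le : W → W → Prop) : W → W → Prop :=
  fun w u => le w u ∧ le u w

/-- The preorder `≤_e` induced by an equivalence relation `e` relative to a preorder `le`. -/
def leOf {W : Type*} (e : W → W → Prop) (le : W → W → Prop) : W → W → Prop :=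
  fun w u => ∀ w', e w w' → ∃ u', e u u' ∧ le w' u'

/-- If `e` is an equivalence relation strongly compatible with a preorder `≤` on `W`, then
`e_{≤_e} = e`, i.e. `(w,u) ∈ e` iff `w ≤_e u` and `u ≤_e w`. -/
theorem stmt1 {W : Type*} (le : W → W → Prop)
    (hrefl : ∀ w, le w w)
    (htrans : ∀ {a b c : W}, le a b → le b c → le a c)
    (e : W → W → Prop) (he : Equivalence e)
    -- compatibility: `e ∘ ≤ ∘ e ⊆ ≤`
    (hcomp : ∀ w a b u : W, e w a → le a b → e b u → le w u)
    -- strong compatibility additionally requires `e_≤ ⊆ e`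
    (hstrong : ∀ w u : W, eOf le w u → e w u) :
    ∀ w u : W, e w u ↔ (leOf e le w u ∧ leOf e le u w) := by
  have key : ∀ w u : W, e w u → leOf e le w u := by
    intro w u hwu w' hww'
    exact ⟨w', he.trans (he.symm hwu) hww', hrefl w'⟩
  intro w u
  constructor
  · intro hwu
    exact ⟨key w u hwu, key u w (he.symm hwu)⟩
  · rintro ⟨h1, h2⟩
    obtain ⟨u', hu', hwu'⟩ := h1 w (he.refl w)
    obtain ⟨w', hw', huw'⟩ := h2 u (he.refl u)
    exact hstrong w u ⟨hcomp w w u' u (he.refl w) hwu' (he.symm hu'),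
      hcomp u u w' w (he.refl u) huw' (he.symm hw')⟩
end

section
/- Let W be a set with at least two elements. An equivalence relation e on W is a completely meet-irreducible element of the complete lattice E(W) of equivalence relations on W if and only if there exists a subset X with ∅ ⊊ X ⊊ W such that for all u, w ∈ W, (u,w) ∈ e if and only if (u ∈ X ↔ w ∈ X); that is, iff e is the equivalence relation whose associated partition is the two-block partition {X, W \ X}. -/
/-- `m` is completely meet-irreducible in a complete lattice: `m ≠ ⊤` and whenever
`m = sInf A`, `m ∈ A`. -/
def CompletelyMeetIrreducible {L : Type*} [CompleteLattice L] (m : L) : Prop :=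
  m ≠ ⊤ ∧ ∀ A : Set L, m = sInf A → m ∈ A

/-- The two-block setoid associated to a subset `X`. -/
def twoBlock {W : Type*} (X : Set W) : Setoid W :=
  ⟨fun u w => u ∈ X ↔ w ∈ X,
    ⟨fun _ => Iff.rfl, fun h => h.symm, fun h1 h2 => h1.trans h2⟩⟩

lemma sInf_rel {W : Type*} {A : Set (Setoid W)} {x y : W} :
    (sInf A).r x y ↔ ∀ a ∈ A, a.r x y := Iff.rfl

/-- For `W` with at least two elements, an equivalence relation `e` on `W` is a completely
meet-irreducible element of the complete lattice `E(W) = Setoid W` iff `e` is given by a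
two-block partition `{X, W \ X}` with `∅ ⊊ X ⊊ W`, i.e. `(u,w) ∈ e ↔ (u ∈ X ↔ w ∈ X)`. -/
theorem stmt4 {W : Type*} [Nontrivial W] (e : Setoid W) :
    CompletelyMeetIrreducible e ↔
      ∃ X : Set W, X ≠ ∅ ∧ X ≠ Set.univ ∧ ∀ u w : W, e.r u w ↔ (u ∈ X ↔ w ∈ X) := by
  constructor
  · rintro ⟨hne, hirr⟩
    -- e = sInf of the family of two-block setoids of its classes
    set A : Set (Setoid W) := Set.range (fun u => twoBlock {z | e.r z u}) with hA
    have heq : e = sInf A := by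
      apply Setoid.ext
      intro x y
      rw [sInf_rel]
      constructor
      · rintro hxy a ⟨u, rfl⟩
        exact ⟨fun h => e.trans' (e.symm' hxy) h, fun h => e.trans' hxy h⟩
      · intro h
        have := h (twoBlock {z | e.r z y}) ⟨y, rfl⟩
        exact this.mpr (e.refl' y)
    obtain ⟨u, hu⟩ := hirr A heq
    refine ⟨{z | e.r z u}, ?_, ?_, ?_⟩
    · intro h
      have : u ∈ ({z | e.r z u} : Set W) := e.refl' u
      rw [h] at this; exact this
    · intro h
      apply hne
      rw [Setoid.eq_top_iff]
      intro x y
      have hx : e.r x u := Set.eq_univ_iff_forall.mp h x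
      have hy : e.r y u := Set.eq_univ_iff_forall.mp h y
      exact e.trans' hx (e.symm' hy)
    · intro x y
      have hu' : twoBlock {z | e.r z u} = e := hu
      conv_lhs => rw [← hu']
      exact Iff.rfl
  · rintro ⟨X, hX0, hX1, hX⟩
    obtain ⟨x, hx⟩ := Set.nonempty_iff_ne_empty.mpr hX0
    obtain ⟨y, hy⟩ : ∃ y, y ∉ X := by
      by_contra h
      push_neg at h
      exact hX1 (Set.eq_univ_of_forall h)
    have hexy : ¬ e.r x y := fun h => hy ((hX x y).mp h |>.mp hx)
    constructor
    · intro h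
      rw [h] at hexy
      exact hexy trivial
    · intro A hA
      by_contra heA
      -- every element of A is strictly above e, hence equals ⊤
      have hall : ∀ a ∈ A, a = ⊤ := by
        intro a ha
        have hle : e ≤ a := hA ▸ sInf_le ha
        by_contra htop
        -- a ≠ ⊤ but a ≥ e and a ≠ e
        have hane : a ≠ e := fun h => heA (h ▸ ha)
        -- there exist u, w with a u w but ¬ e u w
        have ⟨u, w, hauw, heuw⟩ : ∃ u w, a.r u w ∧ ¬ e.r u w := by
          by_contra h
          push_neg at h
          exact hane (Setoid.ext fun p q => ⟨fun hp => h p q hp, fun hp => hle hp⟩)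
        -- u, w on opposite sides of X; WLOG u ∈ X, w ∉ X
        rw [hX] at heuw
        have key : ∀ p q : W, p ∈ X → q ∉ X → a.r p q := by
          intro p q hp hq
          rcases Classical.em (u ∈ X) with hu | hu
          · have hw : w ∉ X := fun hw => heuw ⟨fun _ => hw, fun _ => hu⟩
            have h1 : a.r p u := hle ((hX p u).mpr ⟨fun _ => hu, fun _ => hp⟩)
            have h2 : a.r w q := hle ((hX w q).mpr ⟨fun h => absurd h hw, fun h => absurd h hq⟩)
            exact a.trans' h1 (a.trans' hauw h2)
          · have hw : w ∈ X := by
              by_contra hw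
              exact heuw ⟨fun h => absurd h hu, fun h => absurd h hw⟩
            have h1 : a.r p w := hle ((hX p w).mpr ⟨fun _ => hw, fun _ => hp⟩)
            have h2 : a.r u q := hle ((hX u q).mpr ⟨fun h => absurd h hu, fun h => absurd h hq⟩)
            exact a.trans' h1 (a.trans' (a.symm' hauw) h2)
        apply htop
        rw [Setoid.eq_top_iff]
        intro p q
        rcases Classical.em (p ∈ X) with hp | hp <;> rcases Classical.em (q ∈ X) with hq | hq
        · exact hle ((hX p q).mpr ⟨fun _ => hq, fun _ => hp⟩)
        · exact key p q hp hq
        · exact a.symm' (key q p hq hp)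
        · exact hle ((hX p q).mpr ⟨fun h => absurd h hp, fun h => absurd h hq⟩)
      have : (sInf A).r x y := by
        rw [sInf_rel]
        intro a ha
        rw [hall a ha]
        trivial
      exact hexy (hA ▸ this)
end

section
/- Let X be a finite type, W := X → Bool, and Y a finite subset of X with |Y| ≥ 2, enumerated without repetitions as y₁, …, yₙ. For a relation R ⊆ W × W and U ⊆ W, write R(U) := R ∩ (U × U); a permutation g of W acts on relations by g·R := {(g a, g b) | (a,b) ∈ R}. Then there is no function T : (Set (W × W))ⁿ → Set (W × W) such that (i) g·T(R₁, …, Rₙ) = T(g·R₁, …, g·Rₙ) for every permutation g of W and all relations R₁, …, Rₙ ⊆ W × W, and (ii) e^Σ_Y(U) = T(e_{y₁}(U), …, e_{yₙ}(U)) for every U ⊆ W. In particular, the agenda e^Σ_Y cannot be expressed as a term function of the single-parameter equivalence relations e_{y₁}, …, e_{yₙ}. -/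
/-- The sum-score of a binary profile `w` on a finite set `Y` of parameters:
the number of `y ∈ Y` with `w y = true`. -/
def score {X : Type*} (Y : Finset X) (w : X → Bool) : ℕ :=
  (Y.filter fun y => w y = true).card

/-- Action of a permutation `g` of `W` on binary relations over `W` (as sets of pairs):
`g·R := {(g a, g b) | (a,b) ∈ R}`. -/
def permAct {W : Type*} (g : Equiv.Perm W) (R : Set (W × W)) : Set (W × W) :=
  (fun p : W × W => (g p.1, g p.2)) '' R

/-- Restriction of a relation to a subset: `R(U) := R ∩ (U × U)`. -/
def restrictRel {W : Type*} (R : Set (W × W)) (U : Set W) : Set (W × W) :=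
  R ∩ U ×ˢ U

/-- With `W = X → Bool` and `Y ⊆ X`, `|Y| = n ≥ 2`, enumerated without repetitions by
`y : Fin n → X`, there is no function `T` on `n`-tuples of relations which (i) commutes
with the action of every permutation of `W` and (ii) expresses the restricted sum-score
agenda `e^Σ_Y(U)` as `T(e_{y₁}(U), …, e_{yₙ}(U))` for every `U ⊆ W`. -/
theorem stmt13 {X : Type*} [Fintype X] (Y : Finset X) (n : ℕ) (hn : 2 ≤ n)
    (hcard : Y.card = n) (y : Fin n → X) (hinj : Function.Injective y)
    (hrange : ∀ x, x ∈ Y ↔ ∃ i, y i = x) :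
    ¬ ∃ T : (Fin n → Set ((X → Bool) × (X → Bool))) → Set ((X → Bool) × (X → Bool)),
        (∀ (g : Equiv.Perm (X → Bool)) (R : Fin n → Set ((X → Bool) × (X → Bool))),
          permAct g (T R) = T fun i => permAct g (R i)) ∧
        (∀ U : Set (X → Bool),
          restrictRel {p : (X → Bool) × (X → Bool) | score Y p.1 = score Y p.2} U =
            T fun i =>
              restrictRel {p : (X → Bool) × (X → Bool) | p.1 (y i) = p.2 (y i)} U) := by
  classical
  rintro ⟨T, hgT, hT⟩
  set i0 : Fin n := ⟨0, by omega⟩ with hi0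
  set i1 : Fin n := ⟨1, by omega⟩ with hi1
  have hi01 : i0 ≠ i1 := by simp [hi0, hi1, Fin.ext_iff]
  have hy01 : y i0 ≠ y i1 := fun h => hi01 (hinj h)
  set w : X → Bool := fun x => decide (x = y i0) with hw
  set u : X → Bool := fun x => decide (x = y i1) with hu
  set w' : X → Bool := fun _ => false with hw'
  set u' : X → Bool := fun x => decide (x = y i0) || decide (x = y i1) with hu'
  -- distinctness
  have hwu : w ≠ u := by
    intro h; have := congrFun h (y i0); simp [hw, hu, hy01] at this
  have hwu' : w ≠ u' := by
    intro h; have := congrFun h (y i1); simp [hw, hu', hy01.symm] at this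
  have hww' : w ≠ w' := by
    intro h; have := congrFun h (y i0); simp [hw, hw'] at this
  have huw' : u ≠ w' := by
    intro h; have := congrFun h (y i1); simp [hu, hw'] at this
  have huu' : u ≠ u' := by
    intro h; have := congrFun h (y i0); simp [hu, hu', hy01.symm] at this
    exact hy01 this
  have hw'u' : w' ≠ u' := by
    intro h; have := congrFun h (y i0); simp [hw', hu'] at this
  set g : Equiv.Perm (X → Bool) := (Equiv.swap w w').trans (Equiv.swap u u') with hg
  have gw : g w = w' := by
    simp only [hg, Equiv.trans_apply, Equiv.swap_apply_left]
    exact Equiv.swap_apply_of_ne_of_ne huw'.symm hw'u'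
  have gu : g u = u' := by
    have : Equiv.swap w w' u = u := Equiv.swap_apply_of_ne_of_ne hwu.symm huw'
    simp only [hg, Equiv.trans_apply, this, Equiv.swap_apply_left]
  -- agreement pattern fact
  have hF : ∀ i : Fin n, (w (y i) = u (y i)) ↔ (w' (y i) = u' (y i)) := by
    intro i
    by_cases h0 : i = i0
    · subst h0; simp [hw, hu, hw', hu', hy01]
    · by_cases h1 : i = i1
      · subst h1; simp [hw, hu, hw', hu', hy01.symm]
      · have hyi0 : y i ≠ y i0 := fun h => h0 (hinj h)
        have hyi1 : y i ≠ y i1 := fun h => h1 (hinj h)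
        simp [hw, hu, hw', hu', hyi0, hyi1]
  set U : Set (X → Bool) := {w, u} with hU
  set U' : Set (X → Bool) := {w', u'} with hU'
  -- key: permAct g maps each restricted parameter relation of U to that of U'
  have hR : ∀ i : Fin n,
      permAct g (restrictRel {p : (X → Bool) × (X → Bool) | p.1 (y i) = p.2 (y i)} U)
        = restrictRel {p : (X → Bool) × (X → Bool) | p.1 (y i) = p.2 (y i)} U' := by
    intro i
    ext ⟨a, b⟩
    constructor
    · rintro ⟨⟨p1, p2⟩, ⟨hE, h1, h2⟩, heq⟩
      obtain ⟨rfl, rfl⟩ : g p1 = a ∧ g p2 = b := by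
        simpa [Prod.ext_iff] using heq
      rcases h1 with rfl | rfl <;> rcases h2 with rfl | rfl <;>
        simp only [gw, gu] <;>
        refine ⟨?_, by simp [hU'], by simp [hU']⟩
      · rfl
      · exact (hF i).1 hE
      · exact ((hF i).1 hE.symm).symm
      · rfl
    · rintro ⟨hE, h1, h2⟩
      rcases h1 with rfl | rfl <;> rcases h2 with rfl | rfl
      · exact ⟨(w, w), ⟨rfl, Or.inl rfl, Or.inl rfl⟩, by simp [gw]⟩
      · exact ⟨(w, u), ⟨(hF i).2 hE, Or.inl rfl, Or.inr rfl⟩, by simp [gw, gu]⟩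
      · exact ⟨(u, w), ⟨((hF i).2 hE.symm).symm, Or.inr rfl, Or.inl rfl⟩, by simp [gw, gu]⟩
      · exact ⟨(u, u), ⟨rfl, Or.inr rfl, Or.inr rfl⟩, by simp [gu]⟩
  -- score computations
  have hy0Y : y i0 ∈ Y := (hrange _).2 ⟨i0, rfl⟩
  have hy1Y : y i1 ∈ Y := (hrange _).2 ⟨i1, rfl⟩
  have sw : score Y w = 1 := by
    have : (Y.filter fun x => w x = true) = {y i0} := by
      ext x; simp [hw, Finset.mem_filter]
      intro h; subst h; exact hy0Y
    simp [score, this]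
  have su : score Y u = 1 := by
    have : (Y.filter fun x => u x = true) = {y i1} := by
      ext x; simp [hu, Finset.mem_filter]
      intro h; subst h; exact hy1Y
    simp [score, this]
  have sw' : score Y w' = 0 := by
    simp [score, hw']
  have su' : score Y u' = 2 := by
    have : (Y.filter fun x => u' x = true) = {y i0, y i1} := by
      ext x
      simp only [hu', Finset.mem_filter, Bool.or_eq_true, decide_eq_true_eq,
        Finset.mem_insert, Finset.mem_singleton]
      constructor
      · rintro ⟨-, h⟩; exact h
      · rintro (rfl | rfl)
        · exact ⟨hy0Y, Or.inl rfl⟩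
        · exact ⟨hy1Y, Or.inr rfl⟩
    rw [score, this, Finset.card_insert_of_notMem (by simp [hy01]), Finset.card_singleton]
  -- derive contradiction
  have hmem : (w, u) ∈ restrictRel {p : (X → Bool) × (X → Bool) | score Y p.1 = score Y p.2} U :=
    ⟨by simp [sw, su], Or.inl rfl, Or.inr rfl⟩
  rw [hT U] at hmem
  have hmem2 : (w', u') ∈ permAct g (T fun i =>
      restrictRel {p : (X → Bool) × (X → Bool) | p.1 (y i) = p.2 (y i)} U) :=
    ⟨(w, u), hmem, by simp [gw, gu]⟩
  rw [hgT g] at hmem2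
  have hfun : (fun i => permAct g
      (restrictRel {p : (X → Bool) × (X → Bool) | p.1 (y i) = p.2 (y i)} U))
      = fun i => restrictRel {p : (X → Bool) × (X → Bool) | p.1 (y i) = p.2 (y i)} U' :=
    funext hR
  rw [hfun, ← hT U'] at hmem2
  have : score Y w' = score Y u' := hmem2.1
  rw [sw', su'] at this
  exact absurd this (by norm_num)
end

section
/- Let X be a finite type with at least two elements, W := X → Bool, and Y a subset of X with |Y| = 2. Let e := e^Σ_{Y,1≤} and, for each x ∈ X, let e_x be the equivalence relation on W relating w and u iff w x = u x. Then, in the complete lattice E(W) of equivalence relations on W: e_x ⊔ e = ⊤ for every x ∈ X, hence ⨅_{x∈X} (e_x ⊔ e) = ⊤, whereas (⨅_{x∈X} e_x) ⊔ e = e ≠ ⊤. In particular the distributive law ⨅_{x∈X}(e_x ⊔ e) = (⨅_{x∈X} e_x) ⊔ e fails, so the lattice of interrogative agendas generated by the relations e^Σ_{Y',k≤} is not distributive. -/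
/-- The equivalence relation `e^Σ_{Y,k≤}` on binary profiles: `w ~ u` iff
`w_Y ≤ k ↔ u_Y ≤ k`, as an element of the complete lattice `E(W) = Setoid W`. -/
def eSigLe {X : Type*} (Y : Finset X) (k : ℕ) : Setoid (X → Bool) :=
  ⟨fun w u => (score Y w ≤ k ↔ score Y u ≤ k), ⟨fun _ => Iff.rfl, Iff.symm, Iff.trans⟩⟩

/-- The equivalence relation `e_x` on binary profiles: `w ~ u` iff `w x = u x`,
as an element of the complete lattice `E(W) = Setoid W`. -/
def eCoord {X : Type*} (x : X) : Setoid (X → Bool) :=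
  ⟨fun w u => w x = u x, ⟨fun _ => rfl, Eq.symm, Eq.trans⟩⟩

lemma score_update_false_le_one {X : Type*} [DecidableEq X] (Y : Finset X) (x : X) (b : Bool) :
    score Y (Function.update (fun _ => false) x b) ≤ 1 := by
  refine Finset.card_le_one.2 fun y hy z hz => ?_
  simp only [Finset.mem_filter, Function.update_apply] at hy hz
  split_ifs at hy hz <;> simp_all

lemma score_const_false {X : Type*} (Y : Finset X) : score Y (fun _ => false) = 0 := by
  simp [score]

lemma score_const_true {X : Type*} (Y : Finset X) : score Y (fun _ => true) = Y.card := by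
  simp [score]

lemma eCoord_sup_eSigLe_eq_top {X : Type*} (x : X) (Y : Finset X) {k : ℕ} (hk : 1 ≤ k) :
    eCoord x ⊔ eSigLe Y k = ⊤ := by
  classical
  refine top_le_iff.1 fun w u _ => ?_
  let r := eCoord x ⊔ eSigLe Y k
  let v : Bool → X → Bool := Function.update (fun _ => false) x
  have hw : r w (v (w x)) := le_sup_left (a := eCoord x)
    (show w x = v (w x) x by simp [v])
  have hu : r (v (u x)) u := le_sup_left (a := eCoord x)
    (show v (u x) x = u x by simp [v])
  have hv : r (v (w x)) (v (u x)) := le_sup_right (b := eSigLe Y k)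
    (iff_of_true ((score_update_false_le_one Y x _).trans hk)
      ((score_update_false_le_one Y x _).trans hk))
  exact r.trans' (r.trans' hw hv) hu

lemma iInf_eCoord_eq_bot {X : Type*} : ⨅ x : X, eCoord x = ⊥ :=
  le_bot_iff.1 fun _ _ h => funext fun x => iInf_le eCoord x h

lemma eSigLe_ne_top {X : Type*} {Y : Finset X} {k : ℕ} (hk : k < Y.card) : eSigLe Y k ≠ ⊤ := by
  intro h
  have hrel : eSigLe Y k (fun _ => false) (fun _ => true) := h ▸ trivial
  change score Y _ ≤ k ↔ score Y _ ≤ k at hrel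
  rw [score_const_false, score_const_true] at hrel
  omega

theorem stmt15_general {X : Type*} (Y : Finset X) (hY : Y.card = 2) :
    (∀ x : X, eCoord x ⊔ eSigLe Y 1 = ⊤) ∧
    (⨅ x : X, (eCoord x ⊔ eSigLe Y 1)) = ⊤ ∧
    (⨅ x : X, eCoord x) ⊔ eSigLe Y 1 = eSigLe Y 1 ∧
    eSigLe Y 1 ≠ ⊤ ∧
    (⨅ x : X, (eCoord x ⊔ eSigLe Y 1)) ≠ (⨅ x : X, eCoord x) ⊔ eSigLe Y 1 := by
  have hsup : ∀ x : X, eCoord x ⊔ eSigLe Y 1 = ⊤ := fun x => eCoord_sup_eSigLe_eq_top x Y le_rfl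
  have hinf : (⨅ x : X, (eCoord x ⊔ eSigLe Y 1)) = ⊤ := by simp only [hsup, iInf_top]
  have hjoin : (⨅ x : X, eCoord x) ⊔ eSigLe Y 1 = eSigLe Y 1 := by
    rw [iInf_eCoord_eq_bot, bot_sup_eq]
  have hne : eSigLe Y 1 ≠ ⊤ := eSigLe_ne_top (by omega)
  refine ⟨hsup, hinf, hjoin, hne, ?_⟩
  rw [hinf, hjoin]
  exact hne.symm

/-- For `X` finite with at least two elements and `Y ⊆ X` with `|Y| = 2`, letting
`e := e^Σ_{Y,1≤}`: `e_x ⊔ e = ⊤` for every `x`, hence `⨅_x (e_x ⊔ e) = ⊤`, while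
`(⨅_x e_x) ⊔ e = e ≠ ⊤`; in particular the distributive law fails in the lattice
of interrogative agendas. -/
theorem stmt15 {X : Type*} [Fintype X] [Nontrivial X] (Y : Finset X) (hY : Y.card = 2) :
    (∀ x : X, eCoord x ⊔ eSigLe Y 1 = ⊤) ∧
    (⨅ x : X, (eCoord x ⊔ eSigLe Y 1)) = ⊤ ∧
    (⨅ x : X, eCoord x) ⊔ eSigLe Y 1 = eSigLe Y 1 ∧
    eSigLe Y 1 ≠ ⊤ ∧
    (⨅ x : X, (eCoord x ⊔ eSigLe Y 1)) ≠ (⨅ x : X, eCoord x) ⊔ eSigLe Y 1 :=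
  stmt15_general Y hY
end

section
/- Let J be a type, D a complete lattice, X ⊆ D a set every element of which is completely meet-prime in D, and S a ternary relation on D × J × D, with -< defined as below. Then for every c ⊆ J and every 𝒟 ⊆ D, c -< (sInf 𝒟) = sSup {c -< e | e ∈ 𝒟}. -/
/-- `(j -< m) := sInf {n ∈ X | S(n, j, m)}`. -/
def jlt {J D : Type*} [CompleteLattice D] (X : Set D) (S : D → J → D → Prop)
    (j : J) (m : D) : D :=
  sInf {n | n ∈ X ∧ S n j m}

/-- `(c -< e) := sSup {j -< m | j ∈ c, m ∈ X, e ≤ m}`. -/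
def clt {J D : Type*} [CompleteLattice D] (X : Set D) (S : D → J → D → Prop)
    (c : Set J) (e : D) : D :=
  sSup {d | ∃ j ∈ c, ∃ m ∈ X, e ≤ m ∧ d = jlt X S j m}

/-- `m` is completely meet-prime: whenever `sInf A ≤ m`, some `a ∈ A` has `a ≤ m`. -/
def CompletelyMeetPrime {D : Type*} [CompleteLattice D] (m : D) : Prop :=
  ∀ A : Set D, sInf A ≤ m → ∃ a ∈ A, a ≤ m

/-- If every issue in `X` is completely meet-prime in `D`, then
`c -< (sInf 𝒟) = sSup {c -< e | e ∈ 𝒟}` for all `c ⊆ J` and `𝒟 ⊆ D`. -/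
theorem stmt18 {J D : Type*} [CompleteLattice D] (X : Set D)
    (hX : ∀ m ∈ X, CompletelyMeetPrime m) (S : D → J → D → Prop)
    (c : Set J) (𝒟 : Set D) :
    clt X S c (sInf 𝒟) = sSup {d | ∃ e ∈ 𝒟, d = clt X S c e} := by
  apply le_antisymm
  · apply sSup_le
    rintro d ⟨j, hj, m, hm, hle, rfl⟩
    obtain ⟨e, he, hem⟩ := hX m hm 𝒟 hle
    calc jlt X S j m ≤ clt X S c e := le_sSup ⟨j, hj, m, hm, hem, rfl⟩
      _ ≤ sSup {d | ∃ e ∈ 𝒟, d = clt X S c e} := le_sSup ⟨e, he, rfl⟩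
  · apply sSup_le
    rintro d ⟨e, he, rfl⟩
    apply sSup_le
    rintro d ⟨j, hj, m, hm, hem, rfl⟩
    exact le_sSup ⟨j, hj, m, hm, (sInf_le he).trans hem, rfl⟩
end

section
/- Let J be a type, D a complete lattice, X ⊆ D a set every element of which is completely meet-prime in D, and S a ternary relation on D × J × D, with ⊳ defined as below. Then for every family 𝒞 of subsets of J and every e ∈ D, (⋃𝒞) ⊳ e = sInf {c ⊳ e | c ∈ 𝒞}, and for every c ⊆ J and every 𝒟 ⊆ D, c ⊳ (sInf 𝒟) = sInf {c ⊳ e | e ∈ 𝒟}. -/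
/-- `(c ⊳ e) := sInf {j -< m | j ∈ c, m ∈ X, e ≤ m}`. -/
def crhd {J D : Type*} [CompleteLattice D] (X : Set D) (S : D → J → D → Prop)
    (c : Set J) (e : D) : D :=
  sInf {d | ∃ j ∈ c, ∃ m ∈ X, e ≤ m ∧ d = jlt X S j m}

/-- If every issue in `X` is completely meet-prime in `D`, then `⊳` turns arbitrary
unions of coalitions into meets, and `c ⊳ (sInf 𝒟) = sInf {c ⊳ e | e ∈ 𝒟}`. -/
theorem stmt19 {J D : Type*} [CompleteLattice D] (X : Set D)
    (hX : ∀ m ∈ X, CompletelyMeetPrime m) (S : D → J → D → Prop) :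
    (∀ (𝒞 : Set (Set J)) (e : D),
      crhd X S (⋃₀ 𝒞) e = sInf {d | ∃ c ∈ 𝒞, d = crhd X S c e}) ∧
    (∀ (c : Set J) (𝒟 : Set D),
      crhd X S c (sInf 𝒟) = sInf {d | ∃ e ∈ 𝒟, d = crhd X S c e}) := by
  constructor
  · intro 𝒞 e
    apply le_antisymm
    · apply le_sInf
      rintro d ⟨c, hc, rfl⟩
      apply sInf_le_sInf
      rintro d ⟨j, hj, m, hm, hem, rfl⟩
      exact ⟨j, ⟨c, hc, hj⟩, m, hm, hem, rfl⟩
    · apply le_sInf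
      rintro d ⟨j, ⟨c, hc, hj⟩, m, hm, hem, rfl⟩
      exact le_trans (sInf_le ⟨c, hc, rfl⟩) (sInf_le ⟨j, hj, m, hm, hem, rfl⟩)
  · intro c 𝒟
    apply le_antisymm
    · apply le_sInf
      rintro d ⟨e, he, rfl⟩
      apply sInf_le_sInf
      rintro d ⟨j, hj, m, hm, hem, rfl⟩
      exact ⟨j, hj, m, hm, le_trans (sInf_le he) hem, rfl⟩
    · apply le_sInf
      rintro d ⟨j, hj, m, hm, hem, rfl⟩
      obtain ⟨e, he, hem'⟩ := hX m hm 𝒟 hem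
      exact le_trans (sInf_le ⟨e, he, rfl⟩) (sInf_le ⟨j, hj, m, hm, hem', rfl⟩)
end
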